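/- arXiv:1209.0660 — 5 statements merged into one kernel-verified Lean document; each statement's English description precedes it below -/
import Mathlib

section
/- Let A be an order-n normal tropical matrix (n ≥ 1). Then A^{n-1} = A^n, i.e., the (n-1)-st tropical power of A is idempotent under further multiplication by A (Yoeli's theorem). -/
noncomputable section

/-- Tropical (max-plus) matrix product over `EReal = ℝ ∪ {±∞}`. -/
def tropMul {n : ℕ} (A B : Matrix (Fin n) (Fin n) EReal) : Matrix (Fin n) (Fin n) EReal :=
  fun i j => ⨆ k, (A i k + B k j)

/-- Tropical identity matrix: `0` on the diagonal, `-∞` elsewhere. -/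
def tropId (n : ℕ) : Matrix (Fin n) (Fin n) EReal :=
  fun i j => if i = j then 0 else ⊥

/-- Tropical powers of a matrix. -/
def tropPow {n : ℕ} (A : Matrix (Fin n) (Fin n) EReal) : ℕ → Matrix (Fin n) (Fin n) EReal
  | 0 => tropId n
  | k + 1 => tropMul (tropPow A k) A

/-- A matrix is normal: zero diagonal and all entries ≤ 0. -/
def TropNormal {n : ℕ} (A : Matrix (Fin n) (Fin n) EReal) : Prop :=
  (∀ i, A i i = 0) ∧ ∀ i j, A i j ≤ 0

/-- A matrix is real: no `-∞` entries. -/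
def IsRealMat {n : ℕ} (A : Matrix (Fin n) (Fin n) EReal) : Prop :=
  ∀ i j, A i j ≠ ⊥

lemma yoeli_iSup_add_le {ι : Sort*} (f : ι → EReal) (c : EReal) (hc : c ≠ ⊤) :
    (⨆ i, f i) + c ≤ ⨆ i, f i + c := by
  induction c with
  | bot => simp
  | coe c =>
      rw [← EReal.le_sub_iff_add_le (Or.inl (by simp)) (Or.inl (by simp))]
      refine iSup_le fun i => ?_
      rw [EReal.le_sub_iff_add_le (Or.inl (by simp)) (Or.inl (by simp))]
      exact le_iSup (fun i => f i + (c : EReal)) i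
  | top => exact absurd rfl hc

/-- Weight of the length-`m` path `f 0, f 1, …, f m`. -/
def yoeliW {n : ℕ} (A : Matrix (Fin n) (Fin n) EReal) (f : ℕ → Fin n) (m : ℕ) : EReal :=
  ∑ t ∈ Finset.range m, A (f t) (f (t + 1))

lemma yoeli_lower {n : ℕ} (A : Matrix (Fin n) (Fin n) EReal) (f : ℕ → Fin n) :
    ∀ m, yoeliW A f m ≤ tropPow A m (f 0) (f m) := by
  intro m
  induction m with
  | zero => simp [yoeliW, tropPow, tropId]
  | succ m ih =>
      have h1 : yoeliW A f (m + 1) = yoeliW A f m + A (f m) (f (m + 1)) := by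
        simp [yoeliW, Finset.sum_range_succ]
      rw [h1]
      calc yoeliW A f m + A (f m) (f (m+1))
          ≤ tropPow A m (f 0) (f m) + A (f m) (f (m+1)) := add_le_add_left ih _
        _ ≤ ⨆ k, tropPow A m (f 0) k + A k (f (m+1)) :=
            le_iSup (fun k => tropPow A m (f 0) k + A k (f (m+1))) (f m)
        _ = tropPow A (m+1) (f 0) (f (m+1)) := rfl

lemma yoeli_upper {n : ℕ} (A : Matrix (Fin n) (Fin n) EReal)
    (hA : ∀ i j, A i j ≤ 0) (i : Fin n) :
    ∀ m j, tropPow A m i j ≤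
      ⨆ f : ℕ → Fin n, if f 0 = i ∧ f m = j then yoeliW A f m else ⊥ := by
  intro m
  induction m with
  | zero =>
      intro j
      by_cases h : i = j
      · subst h
        have : ((fun _ => i : ℕ → Fin n) 0 = i ∧ (fun _ => i : ℕ → Fin n) 0 = i) := ⟨rfl, rfl⟩
        calc tropPow A 0 i i = 0 := by simp [tropPow, tropId]
          _ ≤ _ := by
              refine le_trans ?_ (le_iSup _ (fun _ => i))
              simp [this, yoeliW]
      · simp [tropPow, tropId, h]
  | succ m ih =>
      intro j
      refine iSup_le fun k => ?_
      have hT : A k j ≠ ⊤ := ((hA k j).trans_lt (by norm_num : (0:EReal) < ⊤)).ne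
      calc tropPow A m i k + A k j
          ≤ (⨆ f : ℕ → Fin n, if f 0 = i ∧ f m = k then yoeliW A f m else ⊥) + A k j :=
            add_le_add_left (ih k) _
        _ ≤ ⨆ f : ℕ → Fin n, (if f 0 = i ∧ f m = k then yoeliW A f m else ⊥) + A k j :=
            yoeli_iSup_add_le _ _ hT
        _ ≤ _ := by
            refine iSup_le fun f => ?_
            by_cases hf : f 0 = i ∧ f m = k
            · set f' : ℕ → Fin n := fun u => if u ≤ m then f u else j with hf'
              have h0 : f' 0 = i := by simp [hf', hf.1]
              have hm1 : f' (m+1) = j := by simp [hf']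
              have hw : yoeliW A f' (m+1) = yoeliW A f m + A k j := by
                rw [yoeliW, Finset.sum_range_succ]
                congr 1
                · refine Finset.sum_congr rfl fun u hu => ?_
                  rw [Finset.mem_range] at hu
                  simp [hf', Nat.le_of_lt hu, Nat.succ_le_of_lt hu]
                · have : f' m = k := by simp [hf', hf.2]
                  rw [this, hm1]
              refine le_trans ?_ (le_iSup _ f')
              simp only [h0, hm1, and_self, if_true, hf, hw, le_refl]
            · simp [hf]

lemma yoeli_splice {n : ℕ} (A : Matrix (Fin n) (Fin n) EReal)
    (hA : ∀ i j, A i j ≤ 0) (f : ℕ → Fin n) (s t m : ℕ)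
    (hst : s < t) (htm : t ≤ m) (hfe : f s = f t) :
    ∃ g : ℕ → Fin n, g 0 = f 0 ∧ g (m - (t - s)) = f m ∧
      yoeliW A f m ≤ yoeliW A g (m - (t - s)) := by
  set d := t - s with hd
  have hsd : s + d = t := by omega
  have hdm : d ≤ m := by omega
  have hsm : s ≤ m - d := by omega
  refine ⟨fun u => if u < s then f u else f (u + d), ?_, ?_, ?_⟩
  · by_cases h : 0 < s
    · simp [h]
    · have hs0 : s = 0 := by omega
      simp only [h, if_false]
      rw [show (0 + d) = t by omega, ← hfe, hs0]
  · have h1 : ¬ (m - d < s) := by omega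
    simp only [h1, if_false]
    congr 1; omega
  · set w : ℕ → EReal := fun u => A (f u) (f (u + 1)) with hw
    set g : ℕ → Fin n := fun u => if u < s then f u else f (u + d) with hg
    have claim1 : ∀ u < s, A (g u) (g (u + 1)) = w u := by
      intro u hu
      have hgu : g u = f u := by simp [hg, hu]
      have hgu1 : g (u + 1) = f (u + 1) := by
        by_cases h : u + 1 < s
        · simp [hg, h]
        · have : u + 1 = s := by omega
          simp only [hg, h, if_false]
          rw [show u + 1 + d = t by omega, ← hfe, this]
      rw [hgu, hgu1]
    have claim2 : ∀ u, s ≤ u → A (g u) (g (u + 1)) = w (u + d) := by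
      intro u hu
      have h1 : ¬ (u < s) := by omega
      have h2 : ¬ (u + 1 < s) := by omega
      simp only [hg, h1, h2, if_false, hw]
      congr 2; omega
    have hgsum : yoeliW A g (m - d) =
        (∑ u ∈ Finset.Ico 0 s, w u) + ∑ u ∈ Finset.Ico s (m - d), w (u + d) := by
      rw [yoeliW, Finset.range_eq_Ico, ← Finset.sum_Ico_consecutive _ (Nat.zero_le s) hsm]
      congr 1
      · exact Finset.sum_congr rfl fun u hu => claim1 u (Finset.mem_Ico.mp hu).2
      · exact Finset.sum_congr rfl fun u hu => claim2 u (Finset.mem_Ico.mp hu).1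
    have hshift : ∑ u ∈ Finset.Ico s (m - d), w (u + d) = ∑ u ∈ Finset.Ico t m, w u := by
      have hIco : Finset.Ico t m = (Finset.Ico s (m - d)).map (addRightEmbedding d) := by
        rw [Finset.map_add_right_Ico]
        congr 1 <;> omega
      rw [hIco, Finset.sum_map]
      rfl
    have hfsum : yoeliW A f m =
        ((∑ u ∈ Finset.Ico 0 s, w u) + ∑ u ∈ Finset.Ico s t, w u)
          + ∑ u ∈ Finset.Ico t m, w u := by
      rw [yoeliW, Finset.range_eq_Ico,
        ← Finset.sum_Ico_consecutive _ (Nat.zero_le t) htm,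
        ← Finset.sum_Ico_consecutive _ (Nat.zero_le s) (le_of_lt hst)]
    have hmid : ∑ u ∈ Finset.Ico s t, w u ≤ 0 :=
      Finset.sum_nonpos fun u _ => hA _ _
    rw [hfsum, hgsum, hshift]
    calc ((∑ u ∈ Finset.Ico 0 s, w u) + ∑ u ∈ Finset.Ico s t, w u) + ∑ u ∈ Finset.Ico t m, w u
        ≤ ((∑ u ∈ Finset.Ico 0 s, w u) + 0) + ∑ u ∈ Finset.Ico t m, w u :=
          add_le_add_left (add_le_add_right hmid _) _
      _ = (∑ u ∈ Finset.Ico 0 s, w u) + ∑ u ∈ Finset.Ico t m, w u := by rw [add_zero]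

lemma yoeli_mono {n : ℕ} (A : Matrix (Fin n) (Fin n) EReal)
    (hd : ∀ i, A i i = 0) {k m : ℕ} (hkm : k ≤ m) (i j : Fin n) :
    tropPow A k i j ≤ tropPow A m i j := by
  induction m, hkm using Nat.le_induction with
  | base => exact le_refl _
  | succ m hkm ih =>
      refine le_trans ih ?_
      calc tropPow A m i j = tropPow A m i j + A j j := by rw [hd j, add_zero]
        _ ≤ ⨆ l, tropPow A m i l + A l j := le_iSup (fun l => tropPow A m i l + A l j) j
        _ = tropPow A (m + 1) i j := rfl

/-- Yoeli's theorem: for an order-n normal matrix, the (n-1)-st tropical power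
equals the n-th. -/
theorem stmt_2 {n : ℕ} (hn : 1 ≤ n) (A : Matrix (Fin n) (Fin n) EReal)
    (hA : TropNormal A) :
    tropPow A (n - 1) = tropPow A n := by
  obtain ⟨hdiag, hle⟩ := hA
  funext i j
  refine le_antisymm (yoeli_mono A hdiag (Nat.sub_le n 1) i j) ?_
  refine le_trans (yoeli_upper A hle i n j) ?_
  refine iSup_le fun f => ?_
  by_cases hf : f 0 = i ∧ f n = j
  · obtain ⟨a, b, hab, hfab⟩ :=
      Fintype.exists_ne_map_eq_of_card_lt (fun u : Fin (n + 1) => f u.val) (by simp)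
    have hab' : (a : ℕ) ≠ (b : ℕ) := fun h => hab (Fin.ext h)
    rcases hab'.lt_or_gt with h | h
    · obtain ⟨g, hg0, hgm, hgle⟩ :=
        yoeli_splice A hle f a.val b.val n h (Nat.lt_succ_iff.mp b.isLt) hfab
      simp only [hf, if_true]
      refine le_trans hgle (le_trans (yoeli_lower A g _) ?_)
      rw [hg0, hgm, hf.1, hf.2]
      exact yoeli_mono A hdiag (by omega) i j
    · obtain ⟨g, hg0, hgm, hgle⟩ :=
        yoeli_splice A hle f b.val a.val n h (Nat.lt_succ_iff.mp a.isLt) hfab.symm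
      simp only [hf, if_true]
      refine le_trans hgle (le_trans (yoeli_lower A g _) ?_)
      rw [hg0, hgm, hf.1, hf.2]
      exact yoeli_mono A hdiag (by omega) i j
  · simp [hf]

end
end

section
/- For any real normal matrix A of order n, there exist ε > 0 and indices i ≠ j such that E_{ij}(-ε) commutes tropically with A, i.e., A⊙E_{ij}(-ε) = E_{ij}(-ε)⊙A. -/
noncomputable section

lemma sup_eq_zero' {n : ℕ} (f : Fin n → EReal) (h1 : ∀ m, f m ≤ 0) (m0 : Fin n)
    (h2 : f m0 = 0) : (⨆ m, f m) = 0 :=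
  le_antisymm (iSup_le h1) (h2 ▸ le_iSup f m0)

lemma aux {n : ℕ} (A : Matrix (Fin n) (Fin n) EReal)
    (hdiag : ∀ i, A i i = 0) (hle : ∀ i j, A i j ≤ 0)
    (i0 j0 : Fin n) (hij : i0 ≠ j0) (e : EReal) (he : e ≤ 0)
    (H : (⨆ m, (A i0 m + (if m = i0 then e else 0)))
       = (⨆ m, ((if m = j0 then e else 0) + A m j0))) :
    tropMul A (fun k l => if k = i0 ∧ l = j0 then e else 0)
      = tropMul (fun k l => if k = i0 ∧ l = j0 then e else 0) A := by
  have hite : ∀ (c : Prop) [Decidable c], (if c then e else (0:EReal)) ≤ 0 := by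
    intro c _; split <;> simp [he]
  funext k l
  simp only [tropMul]
  by_cases hkl : k = i0 ∧ l = j0
  · obtain ⟨hk, hl⟩ := hkl; subst hk; subst hl
    simpa using H
  · have h1 : ∀ m, A k m + (if m = i0 ∧ l = j0 then e else 0) ≤ 0 :=
      fun m => add_nonpos (hle k m) (hite _)
    have h3 : ∀ m, (if k = i0 ∧ m = j0 then e else 0) + A m l ≤ 0 :=
      fun m => add_nonpos (hite _) (hle m l)
    rcases not_and_or.mp hkl with hk | hl
    · -- k ≠ i0
      have h2 : A k k + (if (k:Fin n) = i0 ∧ l = j0 then e else 0) = 0 := by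
        simp [hdiag k, hk]
      have h4 : (if k = i0 ∧ (l:Fin n) = j0 then e else 0) + A l l = 0 := by
        simp [hdiag l, hk]
      rw [sup_eq_zero' _ h1 k h2, sup_eq_zero' _ h3 l h4]
    · -- l ≠ j0
      have h2 : A k k + (if (k:Fin n) = i0 ∧ l = j0 then e else 0) = 0 := by
        simp [hdiag k, hl]
      have h4 : (if k = i0 ∧ (l:Fin n) = j0 then e else 0) + A l l = 0 := by
        simp [hdiag l, hl]
      rw [sup_eq_zero' _ h1 k h2, sup_eq_zero' _ h3 l h4]

lemma sup_eq_const {n : ℕ} (f : Fin n → EReal) (c : EReal) (h1 : ∀ m, f m ≤ c) (m0 : Fin n)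
    (h2 : f m0 = c) : (⨆ m, f m) = c :=
  le_antisymm (iSup_le h1) (h2 ▸ le_iSup f m0)

/-- For any real normal matrix there is a single-entry perturbation matrix
commuting with it. -/
theorem stmt_5 {n : ℕ} (hn : 2 ≤ n) (A : Matrix (Fin n) (Fin n) EReal)
    (hA : TropNormal A) (hreal : IsRealMat A) :
    ∃ eps : ℝ, 0 < eps ∧ ∃ i0 j0 : Fin n, i0 ≠ j0 ∧
      tropMul A (fun k l => if k = i0 ∧ l = j0 then ((-eps : ℝ) : EReal) else 0)
        = tropMul (fun k l => if k = i0 ∧ l = j0 then ((-eps : ℝ) : EReal) else 0) A := by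
  obtain ⟨hdiag, hle⟩ := hA
  by_cases hzero : ∃ p q : Fin n, p ≠ q ∧ A p q = 0
  · obtain ⟨p, q, hpq, h0⟩ := hzero
    refine ⟨1, one_pos, p, q, hpq, ?_⟩
    refine aux A hdiag hle p q hpq _ (EReal.coe_nonpos.mpr (by norm_num)) ?_
    rw [sup_eq_const _ 0 (fun m => add_nonpos (hle p m) (by split <;> [exact EReal.coe_nonpos.mpr (by norm_num); exact le_rfl])) q
        (by simp [Ne.symm hpq, h0]),
      sup_eq_const _ 0 (fun m => add_nonpos (by split <;> [exact EReal.coe_nonpos.mpr (by norm_num); exact le_rfl]) (hle m q)) p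
        (by simp [hpq, h0])]
  · push_neg at hzero
    have hneg : ∀ p q : Fin n, p ≠ q → A p q < 0 :=
      fun p q h => lt_of_le_of_ne (hle p q) (hzero p q h)
    have hfin : ∀ p q : Fin n, ((A p q).toReal : EReal) = A p q := by
      intro p q
      exact EReal.coe_toReal (ne_top_of_le_ne_top (by simp) (hle p q)) (hreal p q)
    obtain ⟨i0, j0, hij⟩ : ∃ i0 j0 : Fin n, i0 ≠ j0 :=
      ⟨⟨0, by omega⟩, ⟨1, by omega⟩, Fin.ne_of_val_ne (by norm_num)⟩
    set S : Finset (Fin n × Fin n) := Finset.univ.filter (fun p => p.1 ≠ p.2) with hSdef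
    have hS : S.Nonempty := ⟨(i0, j0), by simp [hSdef, hij]⟩
    set t : ℝ := S.sup' hS (fun p => (A p.1 p.2).toReal) with htdef
    have ht_neg : t < 0 := by
      rw [htdef, Finset.sup'_lt_iff]
      intro b hb
      rw [hSdef, Finset.mem_filter] at hb
      have := hneg b.1 b.2 hb.2
      rw [← hfin b.1 b.2] at this
      exact_mod_cast this
    have ht_le : ∀ p q : Fin n, p ≠ q → A p q ≤ ((t : ℝ) : EReal) := by
      intro p q h
      rw [← hfin p q]
      exact_mod_cast Finset.le_sup' (fun p : Fin n × Fin n => (A p.1 p.2).toReal)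
        (by simp [hSdef, h] : (p, q) ∈ S)
    refine ⟨-t, by linarith, i0, j0, hij, ?_⟩
    have hcoe : ((-(-t) : ℝ) : EReal) = ((t : ℝ) : EReal) := by norm_num
    refine aux A hdiag hle i0 j0 hij _ (by rw [hcoe]; exact_mod_cast ht_neg.le) ?_
    rw [hcoe]
    rw [sup_eq_const _ ((t : ℝ) : EReal) ?_ i0 (by simp [hdiag i0]),
        sup_eq_const _ ((t : ℝ) : EReal) ?_ j0 (by simp [hdiag j0])]
    · intro m
      by_cases h : m = j0
      · subst h; simp [hdiag]
      · simpa [h] using ht_le m j0 h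
    · intro m
      by_cases h : m = i0
      · subst h; simp [hdiag]
      · simpa [h] using ht_le i0 m (fun hh => h hh.symm)
end
end

section
/- Let r ≤ 0 be a real number and let A and B be order-n real matrices with zero diagonal and all off-diagonal entries in the closed interval [2r, r]. Then A⊙B = B⊙A = A⊕B, where ⊕ is entrywise max and ⊙ the tropical product. -/
noncomputable section

lemma trop_key {n : ℕ} (r : ℝ) (hr : r ≤ 0)
    (A B : Matrix (Fin n) (Fin n) EReal)
    (hAd : ∀ i, A i i = 0) (hBd : ∀ i, B i i = 0)
    (hAo : ∀ i j, i ≠ j → ((2 * r : ℝ) : EReal) ≤ A i j ∧ A i j ≤ ((r : ℝ) : EReal))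
    (hBo : ∀ i j, i ≠ j → ((2 * r : ℝ) : EReal) ≤ B i j ∧ B i j ≤ ((r : ℝ) : EReal)) :
    tropMul A B = (fun i j => max (A i j) (B i j)) := by
  have h2r0 : ((2 * r : ℝ) : EReal) ≤ 0 := by
    exact_mod_cast by nlinarith
  have hAle : ∀ i j, A i j ≤ ((r : ℝ) : EReal) ∨ A i j = 0 := by
    intro i j
    by_cases h : i = j
    · right; rw [h]; exact hAd j
    · left; exact (hAo i j h).2
  have h2A : ∀ i j, ((2 * r : ℝ) : EReal) ≤ A i j := by
    intro i j
    by_cases h : i = j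
    · rw [h, hAd]; exact h2r0
    · exact (hAo i j h).1
  have h2B : ∀ i j, ((2 * r : ℝ) : EReal) ≤ B i j := by
    intro i j
    by_cases h : i = j
    · rw [h, hBd]; exact h2r0
    · exact (hBo i j h).1
  funext i j
  apply le_antisymm
  · apply iSup_le
    intro k
    by_cases hki : k = i
    · subst hki
      rw [hAd, zero_add]
      exact le_max_right _ _
    by_cases hkj : k = j
    · subst hkj
      rw [hBd, add_zero]
      exact le_max_left _ _
    · have h1 : A i k ≤ ((r : ℝ) : EReal) := (hAo i k (fun h => hki h.symm)).2
      have h2 : B k j ≤ ((r : ℝ) : EReal) := (hBo k j hkj).2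
      have : A i k + B k j ≤ ((r : ℝ) : EReal) + ((r : ℝ) : EReal) :=
        add_le_add h1 h2
      calc A i k + B k j ≤ ((r : ℝ) : EReal) + ((r : ℝ) : EReal) := this
        _ = ((2 * r : ℝ) : EReal) := by rw [← EReal.coe_add]; norm_num [two_mul]
        _ ≤ A i j := h2A i j
        _ ≤ max (A i j) (B i j) := le_max_left _ _
  · apply max_le
    · have : A i j = A i j + B j j := by rw [hBd, add_zero]
      rw [this]
      exact le_iSup (fun k => A i k + B k j) j
    · have : B i j = A i i + B i j := by rw [hAd, zero_add]
      rw [this]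
      exact le_iSup (fun k => A i k + B k j) i

/-- Two real matrices with zero diagonal and off-diagonal entries in [2r, r]
commute, with product the entrywise max. -/
theorem stmt_10 {n : ℕ} (r : ℝ) (hr : r ≤ 0)
    (A B : Matrix (Fin n) (Fin n) EReal)
    (hAd : ∀ i, A i i = 0) (hBd : ∀ i, B i i = 0)
    (hAo : ∀ i j, i ≠ j → ((2 * r : ℝ) : EReal) ≤ A i j ∧ A i j ≤ ((r : ℝ) : EReal))
    (hBo : ∀ i j, i ≠ j → ((2 * r : ℝ) : EReal) ≤ B i j ∧ B i j ≤ ((r : ℝ) : EReal)) :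
    tropMul A B = (fun i j => max (A i j) (B i j)) ∧
    tropMul B A = (fun i j => max (A i j) (B i j)) := by
  refine ⟨trop_key r hr A B hAd hBd hAo hBo, ?_⟩
  rw [trop_key r hr B A hBd hAd hBo hAo]
  funext i j
  exact max_comm _ _
end
end

section
/- Let A be a real normal matrix of order n and let X be a real normal matrix with A⊙X = X⊙A = X. Then A ≤ 𝐗̲ entrywise, where 𝐗̲_{kj} = min( min_i (x_{ij} - x_{ik}), min_i (x_{ki} - x_{ji}) ). Consequently A ≤ X entrywise. -/
noncomputable section

/-- The lower matrix of A. -/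
def lowerMat {n : ℕ} (A : Matrix (Fin n) (Fin n) EReal) : Matrix (Fin n) (Fin n) EReal :=
  fun k j => ⨅ i, min (A i j - A i k) (A k i - A j i)

/-- If A and X are real normal with both tropical products equal to X, then A is
below the lower matrix of X, and hence below X. -/
theorem stmt_16 {n : ℕ} (A X : Matrix (Fin n) (Fin n) EReal)
    (hA : TropNormal A) (hrealA : IsRealMat A)
    (hX : TropNormal X) (hrealX : IsRealMat X)
    (h1 : tropMul A X = X) (h2 : tropMul X A = X) :
    (∀ i j, A i j ≤ lowerMat X i j) ∧ (∀ i j, A i j ≤ X i j) := by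
  have hXtop : ∀ i j, X i j ≠ ⊤ := fun i j h => by
    have := hX.2 i j; rw [h] at this; exact absurd this (by simp)
  have key1 : ∀ i k j, X i k + A k j ≤ X i j := fun i k j => by
    calc X i k + A k j ≤ ⨆ m, (X i m + A m j) := le_iSup (fun m => X i m + A m j) k
    _ = X i j := congrFun (congrFun h2 i) j
  have key2 : ∀ k j i, A k j + X j i ≤ X k i := fun k j i => by
    calc A k j + X j i ≤ ⨆ m, (A k m + X m i) := le_iSup (fun m => A k m + X m i) j
    _ = X k i := congrFun (congrFun h1 k) i
  have main : ∀ k j, A k j ≤ lowerMat X k j := by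
    intro k j
    refine le_iInf fun i => le_min ?_ ?_
    · rw [EReal.le_sub_iff_add_le (Or.inl (hrealX i k)) (Or.inl (hXtop i k))]
      rw [add_comm]; exact key1 i k j
    · rw [EReal.le_sub_iff_add_le (Or.inl (hrealX j i)) (Or.inl (hXtop j i))]
      exact key2 k j i
  refine ⟨main, fun i j => (main i j).trans ?_⟩
  calc lowerMat X i j ≤ min (X i j - X i i) (X i i - X j i) := iInf_le _ i
  _ ≤ X i j - X i i := min_le_left _ _
  _ = X i j := by rw [hX.1 i, sub_zero]
end
end

section
/- Let n ≥ 3, let p ∈ ℝ^n have all entries > 0, and let δ, ε ≥ 0 satisfy δ + ε ≤ min_i p_i; set m = min(δ,ε). Define P(-p,-ε) to be the n×n matrix with 0 diagonal, entry (i+1, i) equal to -p_i for i ∈ [n-1], entry (1,n) equal to -p_n, and all remaining entries equal to -ε. Then P(-p,-δ) ⊙ P(-p,-ε) = P(-p,-ε) ⊙ P(-p,-δ) = P(-(δ+ε,…,δ+ε), -m), where ⊙ is the tropical matrix product. -/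
noncomputable section

/-- The cyclic matrix P(-p,-e): zero diagonal, cyclic subdiagonal entries -p_j,
all other entries -e. -/
def Pmat {n : ℕ} (p : Fin n → ℝ) (e : ℝ) : Matrix (Fin n) (Fin n) EReal :=
  fun i j =>
    if i = j then 0
    else if (i : ℕ) = ((j : ℕ) + 1) % n then ((-(p j) : ℝ) : EReal)
    else ((-e : ℝ) : EReal)

private lemma mod_ne' {n : ℕ} (hn : 3 ≤ n) (x a b : ℕ) (hab : a < b) (h2 : b - a < n) :
    (x + a) % n ≠ (x + b) % n := by
  intro hEq
  have hmod : Nat.ModEq n (x + a) (x + b) := hEq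
  have hdvd : n ∣ (x + b) - (x + a) := (Nat.modEq_iff_dvd' (by omega)).mp hmod
  have := Nat.le_of_dvd (by omega) hdvd
  omega

private lemma Pdiag {n : ℕ} (q : Fin n → ℝ) (c : ℝ) (i : Fin n) : Pmat q c i i = 0 := by
  simp [Pmat]

private lemma Psub {n : ℕ} (q : Fin n → ℝ) (c : ℝ) (i j : Fin n) (h : i ≠ j)
    (h2 : (i : ℕ) = ((j : ℕ) + 1) % n) : Pmat q c i j = ((-(q j) : ℝ) : EReal) := by
  simp [Pmat, h, h2]

private lemma Poff {n : ℕ} (q : Fin n → ℝ) (c : ℝ) (i j : Fin n) (h : i ≠ j)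
    (h2 : (i : ℕ) ≠ ((j : ℕ) + 1) % n) : Pmat q c i j = ((-c : ℝ) : EReal) := by
  simp [Pmat, h, h2]

private lemma Pbound {n : ℕ} (q : Fin n → ℝ) (c : ℝ) (hcq : ∀ k, c ≤ q k) (i j : Fin n)
    (h : i ≠ j) : Pmat q c i j ≤ ((-c : ℝ) : EReal) := by
  by_cases h2 : (i : ℕ) = ((j : ℕ) + 1) % n
  · rw [Psub q c i j h h2]
    exact_mod_cast neg_le_neg (hcq j)
  · rw [Poff q c i j h h2]

private lemma Pbound0 {n : ℕ} (q : Fin n → ℝ) (c : ℝ) (hc : 0 ≤ c) (hcq : ∀ k, c ≤ q k)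
    (i j : Fin n) : Pmat q c i j ≤ 0 := by
  by_cases h : i = j
  · rw [h, Pdiag]
  · refine le_trans (Pbound q c hcq i j h) ?_
    exact_mod_cast neg_nonpos.mpr hc

private lemma main17 {n : ℕ} (hn : 3 ≤ n) (p : Fin n → ℝ) (hp : ∀ i, 0 < p i)
    (d e : ℝ) (hd : 0 ≤ d) (he : 0 ≤ e) (hsum : ∀ i, d + e ≤ p i) :
    tropMul (Pmat p d) (Pmat p e) = Pmat (fun _ => d + e) (min d e) := by
  have hdp : ∀ k, d ≤ p k := fun k => by linarith [hsum k]
  have hep : ∀ k, e ≤ p k := fun k => by linarith [hsum k]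
  funext i j
  show (⨆ k, Pmat p d i k + Pmat p e k j) = Pmat (fun _ => d + e) (min d e) i j
  by_cases hij : i = j
  · subst hij
    rw [Pdiag]
    apply le_antisymm
    · exact iSup_le fun k => by
        simpa using add_le_add (Pbound0 p d hd hdp i k) (Pbound0 p e he hep k i)
    · have h := le_iSup (fun k => Pmat p d i k + Pmat p e k i) i
      simpa [Pdiag] using h
  · by_cases hc : (i : ℕ) = ((j : ℕ) + 1) % n
    · rw [Psub _ _ i j hij hc]
      apply le_antisymm
      · apply iSup_le; intro k
        by_cases hki : k = i
        · subst hki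
          rw [Pdiag, Psub p e k j hij hc, zero_add]
          exact_mod_cast neg_le_neg (hsum j)
        · by_cases hkj : k = j
          · subst hkj
            rw [Pdiag, Psub p d i k hij hc, add_zero]
            exact_mod_cast neg_le_neg (hsum k)
          · have h1 : Pmat p d i k ≤ ((-d : ℝ) : EReal) :=
              Pbound p d hdp i k (fun h => hki h.symm)
            have h2 : Pmat p e k j ≤ ((-e : ℝ) : EReal) := Pbound p e hep k j hkj
            refine le_trans (add_le_add h1 h2) ?_
            norm_cast; linarith
      · -- witness k0 = j + 2
        have hj2 : ((j : ℕ) + 2) % n < n := Nat.mod_lt _ (by omega)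
        set k0 : Fin n := ⟨((j : ℕ) + 2) % n, hj2⟩ with hk0
        have hjj : ((j : ℕ) + 0) % n = (j : ℕ) := Nat.mod_eq_of_lt (by simpa using j.isLt)
        have hk0j : k0 ≠ j := by
          intro h
          have : ((j : ℕ) + 2) % n = (j : ℕ) := congrArg Fin.val h
          exact mod_ne' hn (j : ℕ) 0 2 (by omega) (by omega) (by omega)
        have hk0i : k0 ≠ i := by
          intro h
          have h' : ((j : ℕ) + 2) % n = ((j : ℕ) + 1) % n := by
            rw [← hc]; exact congrArg Fin.val h
          exact mod_ne' hn (j : ℕ) 1 2 (by omega) (by omega) h'.symm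
        have hik0 : (i : ℕ) ≠ ((k0 : ℕ) + 1) % n := by
          intro h
          have h3 : ((k0 : ℕ) + 1) % n = ((j : ℕ) + 3) % n := by
            show (((j : ℕ) + 2) % n + 1) % n = ((j : ℕ) + 3) % n
            rw [Nat.mod_add_mod]
          rw [h3] at h
          rw [hc] at h
          exact mod_ne' hn (j : ℕ) 1 3 (by omega) (by omega) h
        have hk0jc : (k0 : ℕ) ≠ ((j : ℕ) + 1) % n := by
          intro h
          exact mod_ne' hn (j : ℕ) 1 2 (by omega) (by omega) (h.symm)
        have hterm : Pmat p d i k0 + Pmat p e k0 j = ((-(d + e) : ℝ) : EReal) := by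
          rw [Poff p d i k0 (fun h => hk0i h.symm) hik0, Poff p e k0 j hk0j hk0jc]
          norm_cast; ring
        have h := le_iSup (fun k => Pmat p d i k + Pmat p e k j) k0
        rw [hterm] at h
        refine le_trans ?_ h
        simp
    · rw [Poff _ _ i j hij hc]
      apply le_antisymm
      · apply iSup_le; intro k
        by_cases hki : k = i
        · subst hki
          rw [Pdiag, zero_add, Poff p e k j hij hc]
          exact_mod_cast neg_le_neg (min_le_right d e)
        · by_cases hkj : k = j
          · subst hkj
            rw [Pdiag, add_zero]
            refine le_trans (Pbound p d hdp i k hij) ?_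
            exact_mod_cast neg_le_neg (min_le_left d e)
          · have h1 : Pmat p d i k ≤ ((-d : ℝ) : EReal) :=
              Pbound p d hdp i k (fun h => hki h.symm)
            have h2 : Pmat p e k j ≤ ((-e : ℝ) : EReal) := Pbound p e hep k j hkj
            refine le_trans (add_le_add h1 h2) ?_
            norm_cast
            rcases le_total d e with h | h
            · simp [min_eq_left h]; linarith
            · simp [min_eq_right h]; linarith
      · rcases le_total d e with h | h
        · have hterm : Pmat p d i j + Pmat p e j j = ((-d : ℝ) : EReal) := by
            rw [Pdiag, add_zero, Poff p d i j hij hc]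
          have hle := le_iSup (fun k => Pmat p d i k + Pmat p e k j) j
          rw [hterm] at hle
          refine le_trans ?_ hle
          rw [min_eq_left h]
        · have hterm : Pmat p d i i + Pmat p e i j = ((-e : ℝ) : EReal) := by
            rw [Pdiag, zero_add, Poff p e i j hij hc]
          have hle := le_iSup (fun k => Pmat p d i k + Pmat p e k j) i
          rw [hterm] at hle
          refine le_trans ?_ hle
          rw [min_eq_right h]

/-- Perturbed cyclic matrices commute, with the stated product. -/
theorem stmt_17 {n : ℕ} (hn : 3 ≤ n) (p : Fin n → ℝ) (hp : ∀ i, 0 < p i)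
    (d e : ℝ) (hd : 0 ≤ d) (he : 0 ≤ e) (hsum : ∀ i, d + e ≤ p i) :
    tropMul (Pmat p d) (Pmat p e) = Pmat (fun _ => d + e) (min d e) ∧
    tropMul (Pmat p e) (Pmat p d) = Pmat (fun _ => d + e) (min d e) := by
  constructor
  · exact main17 hn p hp d e hd he hsum
  · have h := main17 hn p hp e d he hd (fun i => by linarith [hsum i])
    rw [h, min_comm, add_comm]
end
end
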